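/- arXiv:2208.09671 — 3 statements merged into one kernel-verified Lean document; each statement's English description precedes it below -/
import Mathlib

section
/- For the database D over schema {ABC, AB, AC, BC} where relation r0 on attributes {A,B,C} contains tuples {(a,b,c1),(a,b1,c),(a1,b,c)}, r1 on {A,B} contains {(a,b),(a,b1),(a1,b)}, r2 on {A,C} contains {(a,c),(a,c1),(a1,c)}, and r3 on {B,C} contains {(b,c),(b,c1),(b1,c)} (where a,a1,b,b1,c,c1 are pairwise distinct constants), every tuple of every relation of D is the projection of some tuple in the natural join r0 ⋈ r1 ⋈ r2 ⋈ r3; that is, D is fully reduced. -/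
/-- A tuple `t` agrees with tuple `u` on the attribute set `S`. -/
def Agrees {α V : Type} (S : Set α) (t u : α → V) : Prop := ∀ a ∈ S, t a = u a

/-- The output of the natural join of the relations `R i` with schemas `s i`:
tuples over all attributes whose restriction to each schema lies in the relation. -/
def JoinOut {ι α V : Type} (s : ι → Set α) (R : ι → Set (α → V)) : Set (α → V) :=
  { t | ∀ i, ∃ u ∈ R i, Agrees (s i) t u }

/-- A database is fully reduced if every tuple of every relation is the projection
(restriction to the relation's schema) of some tuple in the full join output. -/
def FullyReduced {ι α V : Type} (s : ι → Set α) (R : ι → Set (α → V)) : Prop :=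
  ∀ i, ∀ u ∈ R i, ∃ t ∈ JoinOut s R, Agrees (s i) t u

/-!
Every relation of the database is the projection of the full relation `r0` onto its
schema. Hence each tuple of `r0` already lies in the join (it matches itself in every
relation), and each tuple of another relation is the restriction of a tuple of `r0`.
-/

section

variable {ι α V : Type} {s : ι → Set α} {R : ι → Set (α → V)}

theorem Agrees.refl (S : Set α) (t : α → V) : Agrees S t t := fun _ _ => rfl

theorem agrees_pair_iff {x y : α} {t u : α → V} :
    Agrees {x, y} t u ↔ t x = u x ∧ t y = u y := by
  simp [Agrees]

theorem subset_joinOut_of_subset {i₀ : ι} (h : ∀ i, R i₀ ⊆ R i) : R i₀ ⊆ JoinOut s R :=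
  fun t ht i => ⟨t, h i ht, Agrees.refl _ t⟩

theorem FullyReduced.of_subset_joinOut {i₀ : ι} (hjoin : R i₀ ⊆ JoinOut s R)
    (hcover : ∀ i, ∀ u ∈ R i, ∃ t ∈ R i₀, Agrees (s i) t u) : FullyReduced s R :=
  fun i u hu =>
    let ⟨t, ht, hagree⟩ := hcover i u hu
    ⟨t, hjoin ht, hagree⟩

end

-- Attributes A, B, C are encoded as `0, 1, 2 : Fin 3`.
theorem stmt0_general {V : Type} (a a1 b b1 c c1 : V)
    (s : Fin 4 → Set (Fin 3))
    (hs : s = ![Set.univ, {0, 1}, {0, 2}, {1, 2}])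
    (R : Fin 4 → Set (Fin 3 → V))
    (hR : R = ![ {![a, b, c1], ![a, b1, c], ![a1, b, c]},
                 {u | (u 0 = a ∧ u 1 = b) ∨ (u 0 = a ∧ u 1 = b1) ∨ (u 0 = a1 ∧ u 1 = b)},
                 {u | (u 0 = a ∧ u 2 = c) ∨ (u 0 = a ∧ u 2 = c1) ∨ (u 0 = a1 ∧ u 2 = c)},
                 {u | (u 1 = b ∧ u 2 = c) ∨ (u 1 = b ∧ u 2 = c1) ∨ (u 1 = b1 ∧ u 2 = c)} ]) :
    FullyReduced s R := by
  subst hs hR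
  refine FullyReduced.of_subset_joinOut (i₀ := 0) (subset_joinOut_of_subset fun i => ?_) ?_
  · fin_cases i <;> simp [Set.subset_def]
  · intro i u hu
    fin_cases i
    · exact ⟨u, hu, Agrees.refl _ u⟩
    all_goals
      simp only [Fin.reduceFinMk, Matrix.cons_val, Set.mem_ofPred_eq] at hu
      rcases hu with ⟨h₁, h₂⟩ | ⟨h₁, h₂⟩ | ⟨h₁, h₂⟩ <;> simp [agrees_pair_iff, h₁, h₂]

/-- The database D over schema {ABC, AB, AC, BC} with the indicated tuples
(a, a1, b, b1, c, c1 pairwise distinct) is fully reduced for the join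
ABC ⋈ AB ⋈ AC ⋈ BC. Attributes A,B,C are 0,1,2 : Fin 3. -/
theorem stmt0 {V : Type} (a a1 b b1 c c1 : V)
    (hdist : List.Pairwise (· ≠ ·) [a, a1, b, b1, c, c1])
    (s : Fin 4 → Set (Fin 3))
    (hs : s = ![Set.univ, {0, 1}, {0, 2}, {1, 2}])
    (R : Fin 4 → Set (Fin 3 → V))
    (hR : R = ![ {![a, b, c1], ![a, b1, c], ![a1, b, c]},
                 {u | (u 0 = a ∧ u 1 = b) ∨ (u 0 = a ∧ u 1 = b1) ∨ (u 0 = a1 ∧ u 1 = b)},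
                 {u | (u 0 = a ∧ u 2 = c) ∨ (u 0 = a ∧ u 2 = c1) ∨ (u 0 = a1 ∧ u 2 = c)},
                 {u | (u 1 = b ∧ u 2 = c) ∨ (u 1 = b ∧ u 2 = c1) ∨ (u 1 = b1 ∧ u 2 = c)} ]) :
    FullyReduced s R :=
  stmt0_general a a1 b b1 c c1 s hs R hR
end

section
/- Let T be a join tree of an acyclic join hypergraph H, let P1 be a node of T with child a1, and let a1, a2, ..., an be a downward path in T (each a_i the parent of a_{i+1}) satisfying P1 ∩ a1 = P1 ∩ a2 = ... = P1 ∩ an (as sets of attributes). Then the tree T' obtained from T by deleting the edge (P1, a1) and adding the edge (P1, an) is again a join tree of H. -/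
/-- `G` is a join tree (parse tree) of the hypergraph with hyperedges `E i`:
`G` is a tree on the hyperedges and, for every attribute, the set of nodes
containing it is connected (there is a walk staying within that set). -/
def IsJoinTree {ι α : Type} (G : SimpleGraph ι) (E : ι → Set α) : Prop :=
  G.IsTree ∧ ∀ a : α, ∀ i j : ι, a ∈ E i → a ∈ E j →
    ∃ p : G.Walk i j, ∀ k ∈ p.support, a ∈ E k

/-- Reverse path transformation: if `a 0, a 1, ..., a n` is a downward path in a
join tree `T` (each `a i` the parent of `a (i+1)`), with parent `P1` of `a 0`, and
`E P1 ∩ E (a i) = E P1 ∩ E (a 0)` for all `i` (shared-attributes condition), then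
deleting the edge `(P1, a 0)` and adding the edge `(P1, a n)` yields again a join
tree of the hypergraph. -/
theorem stmt2 {ι α : Type} (G : SimpleGraph ι) (E : ι → Set α)
    (hG : IsJoinTree G E) (P1 : ι) (n : ℕ) (a : Fin (n + 1) → ι)
    (hinj : Function.Injective a)
    (hP1 : ∀ i, P1 ≠ a i)
    (hadj0 : G.Adj P1 (a 0))
    (hadj : ∀ i : Fin n, G.Adj (a i.castSucc) (a i.succ))
    (hshare : ∀ i, E P1 ∩ E (a i) = E P1 ∩ E (a 0)) :
    IsJoinTree
      (SimpleGraph.fromEdgeSet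
        ((G.edgeSet \ {s(P1, a 0)}) ∪ {s(P1, a (Fin.last n))})) E := by
  classical
  obtain ⟨hT, hjoin⟩ := hG
  have hconn := hT.isConnected
  have hacyc := hT.IsAcyclic
  set e0 : Sym2 ι := s(P1, a 0) with he0
  set f : Sym2 ι := s(P1, a (Fin.last n)) with hfdef
  set G' : SimpleGraph ι := SimpleGraph.fromEdgeSet ((G.edgeSet \ {e0}) ∪ {f}) with hG'def
  set D : SimpleGraph ι := G \ SimpleGraph.fromEdgeSet {e0} with hDdef
  -- edge set of G'
  have hE' : G'.edgeSet = (G.edgeSet \ {e0}) ∪ {f} := by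
    rw [hG'def, SimpleGraph.edgeSet_fromEdgeSet]
    ext e
    simp only [Set.mem_diff, Set.mem_union, Set.mem_singleton_iff, Set.mem_setOf_eq]
    constructor
    · rintro ⟨h, -⟩; exact h
    · intro h
      refine ⟨h, ?_⟩
      rcases h with ⟨hg, -⟩ | rfl
      · exact G.not_isDiag_of_mem_edgeSet hg
      · rw [hfdef, Sym2.mem_diagSet, Sym2.mk_isDiag_iff]
        exact hP1 (Fin.last n)
  have hD_edge : D.edgeSet = G.edgeSet \ {e0} := by
    rw [hDdef, SimpleGraph.edgeSet_sdiff, SimpleGraph.edgeSet_fromEdgeSet,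
      SimpleGraph.edgeSet_sdiff_sdiff_isDiag]
  have hDle : D ≤ G' := by
    rw [← SimpleGraph.edgeSet_subset_edgeSet, hD_edge, hE']
    exact Set.subset_union_left
  -- adjacency P1 - a (last n) in G'
  have hmemf : f ∈ G'.edgeSet := by rw [hE']; exact Or.inr rfl
  have hfnd : ¬ f.IsDiag := by rw [hfdef, Sym2.mk_isDiag_iff]; exact hP1 (Fin.last n)
  have hadj' : G'.Adj P1 (a (Fin.last n)) := by
    rw [← SimpleGraph.mem_edgeSet]; exact hmemf
  -- edges of G not equal to e0 are in G'
  have hadjG' : ∀ {x y : ι}, G.Adj x y → s(x, y) ≠ e0 → G'.Adj x y := by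
    intro x y h hne
    rw [← SimpleGraph.mem_edgeSet, hE']
    exact Or.inl ⟨G.mem_edgeSet.2 h, hne⟩
  -- the path along a 0, ..., a i in D
  have hpathD : ∀ i : Fin (n + 1), ∃ w : D.Walk (a 0) (a i),
      ∀ k ∈ w.support, ∃ j, k = a j := by
    intro i
    induction i using Fin.induction with
    | zero =>
      refine ⟨SimpleGraph.Walk.nil, ?_⟩
      intro k hk
      simp only [SimpleGraph.Walk.support_nil, List.mem_singleton] at hk
      exact ⟨0, hk⟩
    | succ i ih =>
      obtain ⟨w, hw⟩ := ih
      have hDadj : D.Adj (a i.castSucc) (a i.succ) := by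
        rw [hDdef]
        refine ⟨hadj i, ?_⟩
        simp only [SimpleGraph.fromEdgeSet_adj, Set.mem_singleton_iff, not_and, not_ne_iff]
        intro h1
        exfalso
        rw [he0, Sym2.eq_iff] at h1
        rcases h1 with ⟨h, -⟩ | ⟨-, h⟩
        · exact hP1 i.castSucc h.symm
        · exact hP1 i.succ h.symm
      refine ⟨w.concat hDadj, ?_⟩
      intro k hk
      rw [SimpleGraph.Walk.support_concat] at hk
      rcases List.mem_append.1 hk with hk | hk
      · exact hw k hk
      · exact ⟨i.succ, List.mem_singleton.1 hk⟩
  obtain ⟨wD, hwD⟩ := hpathD (Fin.last n)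
  have hreachD : D.Reachable (a 0) (a (Fin.last n)) := ⟨wD⟩
  -- bridge of G at e0
  have hbridge0 : ¬ D.Reachable P1 (a 0) := by
    have := (SimpleGraph.isAcyclic_iff_forall_adj_isBridge.1 hacyc hadj0)
    exact SimpleGraph.isBridge_iff.1 this
  -- the walk wD transferred to G'
  have hwD_edges : ∀ e ∈ wD.edges, e ∈ G'.edgeSet := by
    intro e he
    have h1 := wD.edges_subset_edgeSet he
    rw [hD_edge] at h1
    rw [hE']; exact Or.inl h1
  set w0 : G'.Walk (a 0) (a (Fin.last n)) := wD.transfer G' hwD_edges with hw0def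
  set wP : G'.Walk P1 (a 0) := SimpleGraph.Walk.cons hadj' w0.reverse with hwPdef
  have hwP_sup : ∀ k ∈ wP.support, k = P1 ∨ ∃ j, k = a j := by
    intro k hk
    rw [hwPdef, SimpleGraph.Walk.support_cons] at hk
    rcases List.mem_cons.1 hk with rfl | hk
    · exact Or.inl rfl
    · right
      rw [SimpleGraph.Walk.support_reverse, List.mem_reverse, hw0def,
        SimpleGraph.Walk.support_transfer] at hk
      exact hwD k hk
  -- f is a bridge of G'
  have hbridgef : G'.IsBridge f := by
    rw [hfdef, SimpleGraph.isBridge_iff]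
    intro hr
    have hsub : (G' \ SimpleGraph.fromEdgeSet {f}) ≤ D := by
      rw [← SimpleGraph.edgeSet_subset_edgeSet, SimpleGraph.edgeSet_sdiff, hD_edge]
      rintro e ⟨he1, he2⟩
      rw [hE'] at he1
      rcases he1 with h | rfl
      · exact h
      · exact absurd (by rw [SimpleGraph.edgeSet_fromEdgeSet]; exact ⟨rfl, hfnd⟩) he2
    exact hbridge0 ((hr.mono hsub).trans hreachD.symm)
  -- acyclicity of G'
  have hacyc' : G'.IsAcyclic := by
    intro v c hc
    have hfnot : f ∉ c.edges :=
      ((SimpleGraph.isBridge_iff_forall_cycle_notMem hmemf).1 hbridgef) c hc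
    have hedges : ∀ e ∈ c.edges, e ∈ G.edgeSet := by
      intro e he
      have h1 := c.edges_subset_edgeSet he
      rw [hE'] at h1
      rcases h1 with ⟨h, -⟩ | rfl
      · exact h
      · exact absurd he hfnot
    exact hacyc (c.transfer G hedges) (hc.transfer hedges)
  -- single-edge reachability
  have step : ∀ {x z : ι}, G.Adj x z → G'.Reachable x z := by
    intro x z h
    by_cases hne : s(x, z) = e0
    · rw [he0, Sym2.eq_iff] at hne
      rcases hne with ⟨rfl, rfl⟩ | ⟨rfl, rfl⟩
      · exact ⟨wP⟩
      · exact ⟨wP.reverse⟩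
    · exact (hadjG' h hne).reachable
  have hconn' : G'.Connected := by
    haveI : Nonempty ι := hconn.nonempty
    refine SimpleGraph.Connected.mk ?_
    intro x y
    obtain ⟨p⟩ := hconn.preconnected x y
    induction p with
    | nil => rfl
    | cons h q ih => exact (step h).trans ih
  refine ⟨⟨hconn', hacyc'⟩, ?_⟩
  -- join tree property
  intro A i j hAi hAj
  obtain ⟨p, hp⟩ := hjoin A i j hAi hAj
  clear hAi hAj
  induction p with
  | nil =>
    refine ⟨SimpleGraph.Walk.nil, ?_⟩
    intro k hk
    simp only [SimpleGraph.Walk.support_nil, List.mem_singleton] at hk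
    subst hk
    exact hp _ (by simp)
  | @cons x z y h q ih =>
    have hAx : A ∈ E x := hp x (by simp)
    have hAz : A ∈ E z := hp z (by simp)
    obtain ⟨q', hq'⟩ := ih (fun k hk => hp k (by
      rw [SimpleGraph.Walk.support_cons]; exact List.mem_cons_of_mem _ hk))
    by_cases hne : s(x, z) = e0
    · rw [he0, Sym2.eq_iff] at hne
      have hP0 : A ∈ E P1 ∩ E (a 0) := by
        rcases hne with ⟨hx1, hz1⟩ | ⟨hx1, hz1⟩
        · rw [hx1] at hAx; rw [hz1] at hAz; exact ⟨hAx, hAz⟩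
        · rw [hx1] at hAx; rw [hz1] at hAz; exact ⟨hAz, hAx⟩
      have hall : ∀ jj, A ∈ E (a jj) := by
        intro jj
        have := hP0
        rw [← hshare jj] at this
        exact this.2
      have hsupP : ∀ k ∈ wP.support, A ∈ E k := by
        intro k hk
        rcases hwP_sup k hk with rfl | ⟨jj, rfl⟩
        · exact hP0.1
        · exact hall jj
      rcases hne with ⟨hx1, hz1⟩ | ⟨hx1, hz1⟩
      · subst hx1; subst hz1
        refine ⟨wP.append q', ?_⟩
        intro k hk
        rw [SimpleGraph.Walk.support_append] at hk
        rcases List.mem_append.1 hk with hk | hk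
        · exact hsupP k hk
        · exact hq' k (List.mem_of_mem_tail hk)
      · subst hx1; subst hz1
        refine ⟨wP.reverse.append q', ?_⟩
        intro k hk
        rw [SimpleGraph.Walk.support_append] at hk
        rcases List.mem_append.1 hk with hk | hk
        · exact hsupP k (by rwa [SimpleGraph.Walk.support_reverse, List.mem_reverse] at hk)
        · exact hq' k (List.mem_of_mem_tail hk)
    · refine ⟨SimpleGraph.Walk.cons (hadjG' h hne) q', ?_⟩
      intro k hk
      rw [SimpleGraph.Walk.support_cons] at hk
      rcases List.mem_cons.1 hk with rfl | hk
      · exact hAx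
      · exact hq' k hk
end

section
/- Let T be a rooted tree whose nodes are relation schemas (attribute sets) forming a join tree of an acyclic join J, and let Σ be the set of tuple generating dependencies consisting of, for every parent-child pair (r, r') in T, the child-to-parent tgd r'(...) → r(...) and the parent-to-child tgd r(...) → r'(...), where shared attributes are equated and non-shared attributes on the right-hand side are existentially quantified (instantiated with fresh constants). Then the chase with Σ starting from any finite database terminates, i.e., reaches a finite database satisfying all tgds of Σ, when chase steps are applied first bottom-up along child-to-parent tgds and then top-down along parent-to-child tgds. -/
/-- A rooted tree on node type `ι`: a parent function such that the root is its own
parent and every node reaches the root by iterating `parent`. -/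
structure RTree (ι : Type) where
  parent : ι → ι
  root : ι
  parent_root : parent root = root
  reach : ∀ i, ∃ n, parent^[n] i = root

/-- A subset `C` of nodes induces a connected subgraph of the tree. -/
def RTree.ConnIn {ι : Type} (t : RTree ι) (C : Set ι) : Prop :=
  ∀ i ∈ C, ∀ j ∈ C,
    Relation.ReflTransGen
      (fun x y => (t.parent x = y ∨ t.parent y = x) ∧ x ∈ C ∧ y ∈ C) i j

/-- The rooted tree `t` is a join tree for the schemas `sch`: for every attribute,
the set of nodes whose schema contains it is connected in `t`. -/
def IsJoinRTree {ι α : Type} (t : RTree ι) (sch : ι → Set α) : Prop :=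
  ∀ a : α, t.ConnIn {i | a ∈ sch i}

/-- The tgd from relation `i` to relation `j` (variables on shared attributes equated,
remaining right-hand-side attributes existentially quantified) is satisfied in `D`:
every tuple of `D i` agrees on the shared attributes with some tuple of `D j`. -/
def TgdSat {ι α V : Type} (sch : ι → Set α) (D : ι → Set (α → V)) (i j : ι) : Prop :=
  ∀ u ∈ D i, ∃ w ∈ D j, ∀ a ∈ sch i ∩ sch j, u a = w a

/-- `D` satisfies the set `Σ` of all child-to-parent and parent-to-child tgds of the
tree `t`. -/
def SatSigma {ι α V : Type} (t : RTree ι) (sch : ι → Set α)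
    (D : ι → Set (α → V)) : Prop :=
  ∀ i, i ≠ t.root → TgdSat sch D i (t.parent i) ∧ TgdSat sch D (t.parent i) i

/-- The active domain of the database `D`: values appearing in some tuple at some
attribute of its relation's schema. -/
def Adom {ι α V : Type} (sch : ι → Set α) (D : ι → Set (α → V)) : Set V :=
  {v | ∃ i, ∃ u ∈ D i, ∃ a ∈ sch i, u a = v}

open Classical in
/-- A chase step for the child-to-parent / parent-to-child tgds of the tree `t`:
some tgd `i → j` of `Σ` is violated by a tuple `u` of `D i`, and a new tuple `w` is
added to `D j`, agreeing with `u` on the shared attributes and taking distinct fresh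
constants (values outside the active domain) on the remaining attributes of `sch j`. -/
def ChaseStep {ι α V : Type} (t : RTree ι) (sch : ι → Set α)
    (D D' : ι → Set (α → V)) : Prop :=
  ∃ i j, ((j = t.parent i ∧ i ≠ t.root) ∨ (i = t.parent j ∧ j ≠ t.root)) ∧
    ∃ u ∈ D i, (¬ ∃ w ∈ D j, ∀ a ∈ sch i ∩ sch j, u a = w a) ∧
    ∃ w : α → V, (∀ a ∈ sch i ∩ sch j, w a = u a) ∧
      (∀ a ∈ sch j \ sch i, w a ∉ Adom sch D) ∧
      (∀ a ∈ sch j \ sch i, ∀ b ∈ sch j \ sch i, a ≠ b → w a ≠ w b) ∧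
      D' = fun k => if k = j then D j ∪ {w} else D k


open Classical

section ChaseAux

variable {ι α V : Type}

lemma RTree.iterate_fixed (t : RTree ι) {i : ι} (h : t.parent i = i) (n : ℕ) :
    t.parent^[n] i = i := by
  induction n with
  | zero => rfl
  | succ n ih => rw [Function.iterate_succ_apply, h, ih]

lemma RTree.eq_root_of_parent_eq (t : RTree ι) {i : ι} (h : t.parent i = i) : i = t.root := by
  obtain ⟨n, hn⟩ := t.reach i
  rw [t.iterate_fixed h] at hn
  exact hn

noncomputable def RTree.depth (t : RTree ι) (i : ι) : ℕ := Nat.find (t.reach i)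

lemma RTree.depth_spec (t : RTree ι) (i : ι) : t.parent^[t.depth i] i = t.root :=
  Nat.find_spec (t.reach i)

lemma RTree.eq_root_of_depth_eq_zero (t : RTree ι) {i : ι} (h : t.depth i = 0) :
    i = t.root := by
  have hs := t.depth_spec i
  rwa [h] at hs

lemma RTree.depth_parent_lt (t : RTree ι) {i : ι} (h : i ≠ t.root) :
    t.depth (t.parent i) < t.depth i := by
  have h0 : t.depth i ≠ 0 := fun hh => h (t.eq_root_of_depth_eq_zero hh)
  obtain ⟨m, hm⟩ := Nat.exists_eq_succ_of_ne_zero h0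
  have hspec := t.depth_spec i
  rw [hm, Function.iterate_succ_apply] at hspec
  have hle : t.depth (t.parent i) ≤ m := Nat.find_min' (t.reach (t.parent i)) hspec
  omega

lemma adom_finite [Fintype ι] (sch : ι → Set α) (D : ι → Set (α → V))
    (hschfin : ∀ i, (sch i).Finite) (hfin : ∀ i, (D i).Finite) :
    (Adom sch D).Finite := by
  have hsub : Adom sch D ⊆ ⋃ i, ⋃ u ∈ D i, u '' sch i := by
    rintro v ⟨i, u, hu, a, ha, hv⟩
    exact Set.mem_iUnion.2 ⟨i, Set.mem_iUnion₂.2 ⟨u, hu, ⟨a, ha, hv⟩⟩⟩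
  exact Set.Finite.subset
    (Set.finite_iUnion fun i => (hfin i).biUnion fun u _ => (hschfin i).image u) hsub

lemma exists_fresh [Fintype ι] [Infinite V] (sch : ι → Set α) (D : ι → Set (α → V))
    (hschfin : ∀ i, (sch i).Finite) (hfin : ∀ i, (D i).Finite)
    (i j : ι) (u : α → V) :
    ∃ w : α → V, (∀ a ∈ sch i ∩ sch j, w a = u a) ∧
      (∀ a ∈ sch j \ sch i, w a ∉ Adom sch D) ∧
      (∀ a ∈ sch j \ sch i, ∀ b ∈ sch j \ sch i, a ≠ b → w a ≠ w b) := by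
  have hA : (Adom sch D).Finite := adom_finite sch D hschfin hfin
  have hc : ((Adom sch D)ᶜ : Set V).Infinite := hA.infinite_compl
  let f := hc.natEmbedding
  have hS : (sch j \ sch i).Finite := (hschfin j).subset Set.diff_subset
  haveI := hS.fintype
  let e := Fintype.equivFin (sch j \ sch i : Set α)
  refine ⟨fun a => if h : a ∈ sch j \ sch i then (f (e ⟨a, h⟩)).1 else u a, ?_, ?_, ?_⟩
  · intro a ha
    have : a ∉ sch j \ sch i := fun h => h.2 ha.1
    simp [this]
  · intro a ha
    simp only [dif_pos ha]
    exact (f (e ⟨a, ha⟩)).2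
  · intro a ha b hb hab
    simp only [dif_pos ha, dif_pos hb]
    intro hcon
    apply hab
    have h1 : e ⟨a, ha⟩ = e ⟨b, hb⟩ :=
      Fin.val_injective (f.injective (Subtype.val_injective hcon))
    have h2 : (⟨a, ha⟩ : (sch j \ sch i : Set α)) = ⟨b, hb⟩ := e.injective h1
    exact congrArg Subtype.val h2

/-- The set of tuples of `D i` violating the tgd `i → j`. -/
def Viol (sch : ι → Set α) (D : ι → Set (α → V)) (i j : ι) : Set (α → V) :=
  {u ∈ D i | ¬ ∃ w ∈ D j, ∀ a ∈ sch i ∩ sch j, u a = w a}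

lemma tgdSat_of_viol_empty {sch : ι → Set α} {D : ι → Set (α → V)} {i j : ι}
    (h : Viol sch D i j = ∅) : TgdSat sch D i j := by
  intro u hu
  by_contra hcon
  have : u ∈ Viol sch D i j := ⟨hu, hcon⟩
  rw [h] at this
  exact this

lemma stepA [Fintype ι] [Infinite V] (t : RTree ι) (sch : ι → Set α)
    (hschfin : ∀ i, (sch i).Finite) (i j : ι)
    (hij : (j = t.parent i ∧ i ≠ t.root) ∨ (i = t.parent j ∧ j ≠ t.root)) :
    ∀ n (D : ι → Set (α → V)), (∀ k, (D k).Finite) →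
      (Viol sch D i j).ncard ≤ n →
      ∃ D', Relation.ReflTransGen (ChaseStep t sch) D D' ∧
        (∀ k, (D' k).Finite) ∧
        (∀ k, D k ⊆ D' k) ∧
        (∀ k, k ≠ j → D' k = D k) ∧
        TgdSat sch D' i j ∧
        (∀ p q, TgdSat sch D p q → (p ≠ j ∨ q = i) → TgdSat sch D' p q) := by
  have hne : i ≠ j := by
    rcases hij with ⟨hj, hi⟩ | ⟨hi', hj⟩
    · intro h
      exact hi (t.eq_root_of_parent_eq (hj.symm.trans h.symm))
    · intro h
      exact hj (t.eq_root_of_parent_eq (hi'.symm.trans h))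
  intro n
  induction n with
  | zero =>
    intro D hfin hcard
    have hVfin : (Viol sch D i j).Finite := (hfin i).subset fun x hx => hx.1
    have hV : Viol sch D i j = ∅ := (Set.ncard_eq_zero hVfin).1 (Nat.le_zero.1 hcard)
    exact ⟨D, .refl, hfin, fun k => subset_rfl, fun k _ => rfl,
      tgdSat_of_viol_empty hV, fun p q h _ => h⟩
  | succ n ih =>
    intro D hfin hcard
    rcases Set.eq_empty_or_nonempty (Viol sch D i j) with hV | ⟨u, hu⟩
    · exact ⟨D, .refl, hfin, fun k => subset_rfl, fun k _ => rfl,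
        tgdSat_of_viol_empty hV, fun p q h _ => h⟩
    · obtain ⟨hu1, hu2⟩ := hu
      obtain ⟨w, hw1, hw2, hw3⟩ := exists_fresh sch D hschfin hfin i j u
      set D₁ : ι → Set (α → V) := fun k => if k = j then D j ∪ {w} else D k with hD₁def
      have hstep : ChaseStep t sch D D₁ := ⟨i, j, hij, u, hu1, hu2, w, hw1, hw2, hw3, hD₁def⟩
      have hD₁j : D₁ j = D j ∪ {w} := if_pos rfl
      have hD₁k : ∀ k, k ≠ j → D₁ k = D k := fun k hk => if_neg hk
      have hD₁i : D₁ i = D i := hD₁k i hne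
      have hfin₁ : ∀ k, (D₁ k).Finite := by
        intro k
        by_cases hk : k = j
        · subst hk
          rw [hD₁j]
          exact (hfin k).union (Set.finite_singleton w)
        · rw [hD₁k k hk]
          exact hfin k
      have hwmem : w ∈ D₁ j := by rw [hD₁j]; exact Or.inr rfl
      have husat : ∃ w' ∈ D₁ j, ∀ a ∈ sch i ∩ sch j, u a = w' a :=
        ⟨w, hwmem, fun a ha => (hw1 a ha).symm⟩
      have hsubV : Viol sch D₁ i j ⊆ Viol sch D i j \ {u} := by
        rintro v ⟨hv1, hv2⟩
        rw [hD₁i] at hv1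
        refine ⟨⟨hv1, ?_⟩, ?_⟩
        · rintro ⟨w', hw', hagree⟩
          exact hv2 ⟨w', by rw [hD₁j]; exact Or.inl hw', hagree⟩
        · intro hvu
          simp only [Set.mem_singleton_iff] at hvu
          subst hvu
          exact hv2 husat
      have hVfin : (Viol sch D i j).Finite := (hfin i).subset fun x hx => hx.1
      have hcard' : (Viol sch D₁ i j).ncard ≤ n := by
        have h1 := Set.ncard_le_ncard hsubV hVfin.diff
        have h2 := Set.ncard_diff_singleton_lt_of_mem (s := Viol sch D i j) (a := u)
          ⟨hu1, hu2⟩ hVfin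
        omega
      obtain ⟨D₂, hreach, hfin₂, hsub₂, heq₂, hsat₂, hpres₂⟩ := ih D₁ hfin₁ hcard'
      refine ⟨D₂, .head hstep hreach, hfin₂, ?_, ?_, hsat₂, ?_⟩
      · intro k x hx
        apply hsub₂ k
        by_cases hk : k = j
        · subst hk
          rw [hD₁j]
          exact Or.inl hx
        · rw [hD₁k k hk]
          exact hx
      · intro k hk
        rw [heq₂ k hk, hD₁k k hk]
      · intro p q hpq hcond
        refine hpres₂ p q ?_ hcond
        by_cases hp : p = j
        · subst hp
          have hq : q = i := hcond.resolve_left (fun h => h rfl)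
          subst hq
          intro v hv
          rw [hD₁j] at hv
          rcases hv with hv | hv
          · obtain ⟨w', hw', ha⟩ := hpq v hv
            exact ⟨w', by rw [hD₁i]; exact hw', ha⟩
          · simp only [Set.mem_singleton_iff] at hv
            subst hv
            refine ⟨u, by rw [hD₁i]; exact hu1, ?_⟩
            intro a ha
            exact hw1 a ⟨ha.2, ha.1⟩
        · intro v hv
          rw [hD₁k p hp] at hv
          obtain ⟨w', hw', ha⟩ := hpq v hv
          refine ⟨w', ?_, ha⟩
          by_cases hq : q = j
          · subst hq
            rw [hD₁j]
            exact Or.inl hw'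
          · rw [hD₁k q hq]
            exact hw'

lemma phase1 [Fintype ι] [Infinite V] (t : RTree ι) (sch : ι → Set α)
    (hschfin : ∀ i, (sch i).Finite) :
    ∀ n (s : Finset ι), s.card = n → ∀ D : ι → Set (α → V), (∀ k, (D k).Finite) →
      t.root ∉ s →
      (∀ i ∈ s, t.parent i ≠ t.root → t.parent i ∈ s) →
      (∀ i, i ∉ s → i ≠ t.root → TgdSat sch D i (t.parent i)) →
      ∃ D', Relation.ReflTransGen (ChaseStep t sch) D D' ∧
        (∀ k, (D' k).Finite) ∧
        (∀ i, i ≠ t.root → TgdSat sch D' i (t.parent i)) := by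
  intro n
  induction n with
  | zero =>
    intro s hcard D hfin _ _ hdone
    refine ⟨D, .refl, hfin, fun i hi => hdone i ?_ hi⟩
    rw [Finset.card_eq_zero.1 hcard]
    exact Finset.notMem_empty i
  | succ n ih =>
    intro s hcard D hfin hroot hclosed hdone
    have hnes : s.Nonempty := Finset.card_pos.1 (by omega)
    obtain ⟨i, his, hmax⟩ := Finset.exists_max_image s t.depth hnes
    have hi_root : i ≠ t.root := fun h => hroot (h ▸ his)
    obtain ⟨D₁, hr1, hfin1, hsub1, heq1, hsat1, hpres1⟩ :=
      stepA t sch hschfin i (t.parent i) (Or.inl ⟨rfl, hi_root⟩)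
        (Viol sch D i (t.parent i)).ncard D hfin le_rfl
    have hcard' : (s.erase i).card = n := by
      rw [Finset.card_erase_of_mem his, hcard]
      omega
    have hroot' : t.root ∉ s.erase i := fun h => hroot (Finset.mem_of_mem_erase h)
    have hclosed' : ∀ i' ∈ s.erase i, t.parent i' ≠ t.root → t.parent i' ∈ s.erase i := by
      intro i' hi' hpr
      have hi's : i' ∈ s := Finset.mem_of_mem_erase hi'
      have hi'root : i' ≠ t.root := fun h => hroot (h ▸ hi's)
      refine Finset.mem_erase.2 ⟨?_, hclosed i' hi's hpr⟩
      intro h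
      have h1 := t.depth_parent_lt hi'root
      have h2 := hmax i' hi's
      rw [h] at h1
      omega
    have hdone' : ∀ i', i' ∉ s.erase i → i' ≠ t.root → TgdSat sch D₁ i' (t.parent i') := by
      intro i' hi' hi'root
      by_cases h : i' = i
      · subst h
        exact hsat1
      · have hi's : i' ∉ s := fun hmem => hi' (Finset.mem_erase.2 ⟨h, hmem⟩)
        refine hpres1 i' (t.parent i') (hdone i' hi's hi'root) (Or.inl ?_)
        intro hpi
        by_cases hpr : t.parent i = t.root
        · exact hi'root (hpi.trans hpr)
        · have := hclosed i his hpr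
          rw [← hpi] at this
          exact hi's this
    obtain ⟨D₂, hr2, hfin2, hsat2⟩ := ih (s.erase i) hcard' D₁ hfin1 hroot' hclosed' hdone'
    exact ⟨D₂, hr1.trans hr2, hfin2, hsat2⟩

lemma phase2 [Fintype ι] [Infinite V] (t : RTree ι) (sch : ι → Set α)
    (hschfin : ∀ i, (sch i).Finite) :
    ∀ n (s : Finset ι), s.card = n → ∀ D : ι → Set (α → V), (∀ k, (D k).Finite) →
      t.root ∉ s →
      (∀ i, i ≠ t.root → TgdSat sch D i (t.parent i)) →
      (∀ p, p ∉ s → p ≠ t.root → t.parent p ∉ s) →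
      (∀ p, p ∉ s → p ≠ t.root → TgdSat sch D (t.parent p) p) →
      ∃ D', Relation.ReflTransGen (ChaseStep t sch) D D' ∧
        (∀ k, (D' k).Finite) ∧ SatSigma t sch D' := by
  intro n
  induction n with
  | zero =>
    intro s hcard D hfin _ hup _ hdone
    have hs : s = ∅ := Finset.card_eq_zero.1 hcard
    subst hs
    exact ⟨D, .refl, hfin, fun i hi => ⟨hup i hi, hdone i (Finset.notMem_empty i) hi⟩⟩
  | succ n ih =>
    intro s hcard D hfin hroot hup hclosed hdone
    have hnes : s.Nonempty := Finset.card_pos.1 (by omega)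
    obtain ⟨k, hks, hmin⟩ := Finset.exists_min_image s t.depth hnes
    have hk_root : k ≠ t.root := fun h => hroot (h ▸ hks)
    obtain ⟨D₁, hr1, hfin1, hsub1, heq1, hsat1, hpres1⟩ :=
      stepA t sch hschfin (t.parent k) k (Or.inr ⟨rfl, hk_root⟩)
        (Viol sch D (t.parent k) k).ncard D hfin le_rfl
    have hcard' : (s.erase k).card = n := by
      rw [Finset.card_erase_of_mem hks, hcard]
      omega
    have hroot' : t.root ∉ s.erase k := fun h => hroot (Finset.mem_of_mem_erase h)
    have hpk_not : t.parent k ∉ s := by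
      intro hmem
      have h1 := hmin (t.parent k) hmem
      have h2 := t.depth_parent_lt hk_root
      omega
    have hup' : ∀ p, p ≠ t.root → TgdSat sch D₁ p (t.parent p) := by
      intro p hp
      refine hpres1 p (t.parent p) (hup p hp) ?_
      by_cases h : p = k
      · right
        rw [h]
      · left
        exact h
    have hclosed' : ∀ p, p ∉ s.erase k → p ≠ t.root → t.parent p ∉ s.erase k := by
      intro p hp hproot
      by_cases h : p = k
      · subst h
        exact fun hmem => hpk_not (Finset.mem_of_mem_erase hmem)
      · have hps : p ∉ s := fun hmem => hp (Finset.mem_erase.2 ⟨h, hmem⟩)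
        exact fun hmem => hclosed p hps hproot (Finset.mem_of_mem_erase hmem)
    have hdone' : ∀ p, p ∉ s.erase k → p ≠ t.root → TgdSat sch D₁ (t.parent p) p := by
      intro p hp hproot
      by_cases h : p = k
      · subst h
        exact hsat1
      · have hps : p ∉ s := fun hmem => hp (Finset.mem_erase.2 ⟨h, hmem⟩)
        refine hpres1 (t.parent p) p (hdone p hps hproot) (Or.inl ?_)
        intro hcon
        have hnp := hclosed p hps hproot
        rw [hcon] at hnp
        exact hnp hks
    obtain ⟨D₂, hr2, hfin2, hsat2⟩ := ih (s.erase k) hcard' D₁ hfin1 hroot' hup' hclosed' hdone'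
    exact ⟨D₂, hr1.trans hr2, hfin2, hsat2⟩

end ChaseAux

/-- The chase with the child-to-parent and parent-to-child tgds of a join tree of an
acyclic join terminates from any finite database: there is a finite sequence of
chase steps reaching a finite database satisfying all the tgds. -/
theorem stmt10 {ι α V : Type} [Fintype ι] [Infinite V]
    (t : RTree ι) (sch : ι → Set α)
    (hschfin : ∀ i, (sch i).Finite)
    (hjt : IsJoinRTree t sch)
    (D : ι → Set (α → V)) (hfin : ∀ i, (D i).Finite) :
    ∃ D' : ι → Set (α → V),
      Relation.ReflTransGen (ChaseStep t sch) D D' ∧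
      (∀ i, (D' i).Finite) ∧ SatSigma t sch D' := by
  obtain ⟨D₁, hr1, hfin1, hup⟩ := phase1 t sch hschfin (Finset.univ.erase t.root).card
    (Finset.univ.erase t.root) rfl D hfin (Finset.notMem_erase _ _)
    (fun i _ hpr => Finset.mem_erase.2 ⟨hpr, Finset.mem_univ _⟩)
    (fun i hi hir => absurd (Finset.mem_erase.2 ⟨hir, Finset.mem_univ _⟩) hi)
  obtain ⟨D₂, hr2, hfin2, hsat⟩ := phase2 t sch hschfin (Finset.univ.erase t.root).card
    (Finset.univ.erase t.root) rfl D₁ hfin1 (Finset.notMem_erase _ _) hup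
    (fun p hp hpr => absurd (Finset.mem_erase.2 ⟨hpr, Finset.mem_univ _⟩) hp)
    (fun p hp hpr => absurd (Finset.mem_erase.2 ⟨hpr, Finset.mem_univ _⟩) hp)
  exact ⟨D₂, hr1.trans hr2, hfin2, hsat⟩
end
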